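/- Let S be an η-sparse family of dyadic cubes, σ a weight with σ_Q ≥ 1 for all Q ∈ S, and w a weight. Fix Q ∈ S and let 2 ≤ p < ∞. Set [w,σ]_{A_p} = sup_{Q' ∈ S} w_{Q'} σ_{Q'}^{p-1} and suppose it is finite and positive. For k ≥ 1, let E_k = {Q' ∈ S : Q' ⊆ Q, σ_{Q'} ≤ σ_Q^{1/2}, 2^{k-1}[w,σ]_{A_p} ψ(σ_Q)^{-1} < w_{Q'} σ_{Q'}^{p-1} ≤ 2^k [w,σ]_{A_p} ψ(σ_Q)^{-1}}, where ψ : [1,∞) → (0,∞) is increasing. Then ∑_{Q' ∈ E_k} σ_{Q'} w(Q') ≤ C σ_Q^{1/2} w(Q), with C depending only on η, p, n. -/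

import Mathlib

open MeasureTheory Set
open scoped ENNReal

noncomputable section

def dyadicCube (n : ℕ) (k : ℤ) (m : Fin n → ℤ) : Set (Fin n → ℝ) :=
  {x | ∀ i, (m i : ℝ) * (2:ℝ) ^ k ≤ x i ∧ x i < ((m i : ℝ) + 1) * (2:ℝ) ^ k}

def IsDyadicCube {n : ℕ} (Q : Set (Fin n → ℝ)) : Prop := ∃ k m, Q = dyadicCube n k m

def IsCube {n : ℕ} (Q : Set (Fin n → ℝ)) : Prop :=
  ∃ (a : Fin n → ℝ) (h : ℝ), 0 < h ∧ Q = {x | ∀ i, a i ≤ x i ∧ x i < a i + h}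

def IsSparse {n : ℕ} (η : ℝ≥0∞) (S : Set (Set (Fin n → ℝ))) : Prop :=
  (∀ Q ∈ S, IsDyadicCube Q) ∧
  ∃ E : Set (Fin n → ℝ) → Set (Fin n → ℝ),
    (∀ Q ∈ S, E Q ⊆ Q ∧ MeasurableSet (E Q) ∧ η * volume Q ≤ volume (E Q)) ∧
    S.PairwiseDisjoint E

def mass {n : ℕ} (w : (Fin n → ℝ) → ℝ≥0∞) (Q : Set (Fin n → ℝ)) : ℝ≥0∞ := ∫⁻ x in Q, w x

def avg {n : ℕ} (w : (Fin n → ℝ) → ℝ≥0∞) (Q : Set (Fin n → ℝ)) : ℝ≥0∞ := mass w Q / volume Q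

def maximalOp {n : ℕ} (f : (Fin n → ℝ) → ℝ≥0∞) (x : Fin n → ℝ) : ℝ≥0∞ :=
  ⨆ (Q : Set (Fin n → ℝ)) (_ : IsCube Q) (_ : x ∈ Q), avg f Q

/-!
Write `L = 2^{k-1} [w,σ]_{A_p} / ψ(σ_Q)`, so that `L < w_{Q'} σ_{Q'}^{p-1} ≤ 2L` on `E_k`, and
split `E_k` into layers `2^m ≤ σ_{Q'} ≤ 2^{m+1}`; only layers with `2^m ≤ σ_Q^{1/2}` are nonempty.
On a layer, the upper bound gives `σ_{Q'} w(Q') ≤ 2L 2^{m(2-p)} |Q'|` (this is where `p ≥ 2`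
enters), sparseness gives `η ∑ |Q'| ≤ |⋃ Q'|`, and the lower bound, summed over the pairwise
disjoint maximal cubes of the layer, gives `L |⋃ Q'| ≤ 2^{(m+1)(p-1)} w(Q)`. So the layer
contributes at most `2^{m+p} η⁻¹ w(Q)`, and the geometric series over `2^m ≤ σ_Q^{1/2}` sums to
`2^{p+1} η⁻¹ σ_Q^{1/2} w(Q)`.
-/

lemma Int.floor_div_two_zpow_add (r : ℝ) (k : ℤ) (e : ℕ) :
    ⌊r / 2 ^ (k + e)⌋ = ⌊r / 2 ^ k⌋ / 2 ^ e := by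
  rw [zpow_add₀ two_ne_zero, zpow_natCast, ← div_div, ← Nat.cast_ofNat, ← Nat.cast_pow,
    Int.floor_div_natCast]
  simp

section Dyadic

variable {n : ℕ}

lemma mem_dyadicCube_iff {k : ℤ} {m : Fin n → ℤ} {x : Fin n → ℝ} :
    x ∈ dyadicCube n k m ↔ ∀ i, ⌊x i / 2 ^ k⌋ = m i := by
  have h2k : (0 : ℝ) < 2 ^ k := by positivity
  simp only [dyadicCube, mem_ofPred_eq, Int.floor_eq_iff, le_div_iff₀ h2k, div_lt_iff₀ h2k]

lemma dyadicCube_eq_pi (k : ℤ) (m : Fin n → ℤ) :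
    dyadicCube n k m = univ.pi fun i => Ico ((m i : ℝ) * 2 ^ k) ((m i + 1) * 2 ^ k) := by
  ext x; simp [dyadicCube, mem_pi]

lemma volume_dyadicCube (k : ℤ) (m : Fin n → ℤ) :
    volume (dyadicCube n k m) = ENNReal.ofReal (2 ^ k) ^ n := by
  simp [dyadicCube_eq_pi, volume_pi_pi, Real.volume_Ico, add_mul]

lemma IsDyadicCube.measurableSet {Q : Set (Fin n → ℝ)} (hQ : IsDyadicCube Q) : MeasurableSet Q := by
  obtain ⟨k, m, rfl⟩ := hQ
  rw [dyadicCube_eq_pi]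
  exact .univ_pi fun _ => measurableSet_Ico

lemma IsDyadicCube.volume_ne_zero {Q : Set (Fin n → ℝ)} (hQ : IsDyadicCube Q) : volume Q ≠ 0 := by
  obtain ⟨k, m, rfl⟩ := hQ
  simp [volume_dyadicCube, zpow_pos]

lemma IsDyadicCube.volume_ne_top {Q : Set (Fin n → ℝ)} (hQ : IsDyadicCube Q) : volume Q ≠ ∞ := by
  obtain ⟨k, m, rfl⟩ := hQ
  simp [volume_dyadicCube]

lemma dyadicCube_subset_of_le {k k' : ℤ} {m m' : Fin n → ℤ} (hk : k ≤ k') {x : Fin n → ℝ}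
    (hx : x ∈ dyadicCube n k m) (hx' : x ∈ dyadicCube n k' m') :
    dyadicCube n k m ⊆ dyadicCube n k' m' := by
  obtain ⟨e, rfl⟩ := Int.le.dest hk
  intro y hy
  rw [mem_dyadicCube_iff] at hx hx' hy ⊢
  intro i
  rw [Int.floor_div_two_zpow_add, hy, ← hx, ← Int.floor_div_two_zpow_add, hx']

lemma IsDyadicCube.subset_or_subset {P R : Set (Fin n → ℝ)} (hP : IsDyadicCube P)
    (hR : IsDyadicCube R) (h : ¬Disjoint P R) : P ⊆ R ∨ R ⊆ P := by
  obtain ⟨k, m, rfl⟩ := hP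
  obtain ⟨k', m', rfl⟩ := hR
  obtain ⟨x, hx, hx'⟩ := not_disjoint_iff.1 h
  rcases le_total k k' with hk | hk
  · exact .inl (dyadicCube_subset_of_le hk hx hx')
  · exact .inr (dyadicCube_subset_of_le hk hx' hx)

lemma dyadicCube_eq_floor {k : ℤ} {m : Fin n → ℤ} {x : Fin n → ℝ} (hx : x ∈ dyadicCube n k m) :
    dyadicCube n k m = dyadicCube n k fun i => ⌊x i / 2 ^ k⌋ := by
  rw [mem_dyadicCube_iff] at hx
  simp only [hx]

lemma le_of_dyadicCube_subset (hn : n ≠ 0) {k k' : ℤ} {m m' : Fin n → ℤ}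
    (h : dyadicCube n k m ⊆ dyadicCube n k' m') : k ≤ k' := by
  have hvol := measure_mono (μ := volume) h
  rw [volume_dyadicCube, volume_dyadicCube, ENNReal.pow_le_pow_left_iff hn,
    ENNReal.ofReal_le_ofReal_iff (by positivity)] at hvol
  exact (zpow_le_zpow_iff_right₀ one_lt_two).1 hvol

lemma countable_setOf_isDyadicCube : {Q : Set (Fin n → ℝ) | IsDyadicCube Q}.Countable :=
  (countable_range fun km : ℤ × (Fin n → ℤ) => dyadicCube n km.1 km.2).mono
    fun _ ⟨k, m, hQ⟩ => mem_range.2 ⟨(k, m), hQ.symm⟩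

lemma IsDyadicCube.finite_setOf_between {P Q : Set (Fin n → ℝ)} (hP : IsDyadicCube P)
    (hQ : IsDyadicCube Q) :
    {R | IsDyadicCube R ∧ P ⊆ R ∧ R ⊆ Q}.Finite := by
  rcases eq_or_ne n 0 with rfl | hn
  · exact toFinite _
  obtain ⟨k₁, m₁, rfl⟩ := hP
  obtain ⟨k₂, m₂, rfl⟩ := hQ
  obtain ⟨x, hx⟩ : (dyadicCube n k₁ m₁).Nonempty := by
    rw [dyadicCube_eq_pi, univ_pi_nonempty_iff]
    exact fun i => nonempty_Ico.2 (by nlinarith [zpow_pos (two_pos (α := ℝ)) k₁])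
  refine ((finite_Icc k₁ k₂).image fun k => dyadicCube n k fun i => ⌊x i / 2 ^ k⌋).subset ?_
  rintro _ ⟨⟨k, m, rfl⟩, hPR, hRQ⟩
  exact ⟨k, ⟨le_of_dyadicCube_subset hn hPR, le_of_dyadicCube_subset hn hRQ⟩,
    (dyadicCube_eq_floor (hPR hx)).symm⟩

end Dyadic

namespace ENNReal

lemma exists_two_pow_le_lt {x : ℝ≥0∞} (h1 : 1 ≤ x) (hx : x ≠ ∞) :
    ∃ m : ℕ, 2 ^ m ≤ x ∧ x < 2 ^ (m + 1) := by
  lift x to NNReal using hx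
  obtain ⟨m, h⟩ := exists_nat_pow_near (one_le_coe_iff.1 h1) _root_.one_lt_two
  exact ⟨m, by exact_mod_cast h.1, by exact_mod_cast h.2⟩

lemma tsum_two_pow_le (s : ℝ≥0∞) :
    ∑' m : {m : ℕ | (2 : ℝ≥0∞) ^ m ≤ s}, (2 : ℝ≥0∞) ^ (m : ℕ) ≤ 2 * s := by
  rcases eq_or_ne s ∞ with rfl | hs
  · simp
  rcases lt_or_ge s 1 with hs1 | hs1
  · have : IsEmpty {m : ℕ | (2 : ℝ≥0∞) ^ m ≤ s} :=
      ⟨fun m => (hs1.trans_le (one_le_pow₀ one_le_two)).not_ge m.2⟩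
    simp
  obtain ⟨M, hM, hM'⟩ := exists_two_pow_le_lt hs1 hs
  have hsub : {m : ℕ | (2 : ℝ≥0∞) ^ m ≤ s} ⊆ Finset.range (M + 1) := fun m hm =>
    Finset.mem_range.2 <| (Nat.pow_lt_pow_iff_right _root_.one_lt_two).1 <| by
      exact_mod_cast hm.trans_lt hM'
  calc ∑' m : {m : ℕ | (2 : ℝ≥0∞) ^ m ≤ s}, (2 : ℝ≥0∞) ^ (m : ℕ)
      ≤ ∑' m : (Finset.range (M + 1) : Set ℕ), (2 : ℝ≥0∞) ^ (m : ℕ) :=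
        tsum_mono_subtype _ hsub
    _ = ∑ m ∈ Finset.range (M + 1), (2 : ℝ≥0∞) ^ m := Finset.tsum_subtype _ _
    _ = ((∑ m ∈ Finset.range (M + 1), 2 ^ m : ℕ) : ℝ≥0∞) := by push_cast; rfl
    _ ≤ 2 ^ (M + 1) := by
        exact_mod_cast (Nat.geomSum_lt le_rfl fun _ => Finset.mem_range.1).le
    _ ≤ 2 * s := by rw [pow_succ']; gcongr

lemma rpow_add_one_of_nonneg (x : ℝ≥0∞) {y : ℝ} (hy : 0 ≤ y) : x ^ (y + 1) = x ^ y * x := by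
  rw [rpow_add_of_nonneg _ _ hy zero_le_one, rpow_one]

end ENNReal

section Sparse

variable {n : ℕ} {η : ℝ≥0∞} {S T : Set (Set (Fin n → ℝ))} {Q : Set (Fin n → ℝ)}
  {w σ : (Fin n → ℝ) → ℝ≥0∞} {p : ℝ} {L : ℝ≥0∞}

lemma mass_mono {P : Set (Fin n → ℝ)} (h : P ⊆ Q) : mass w P ≤ mass w Q :=
  lintegral_mono_set h

lemma IsDyadicCube.avg_mul_volume (hQ : IsDyadicCube Q) : avg w Q * volume Q = mass w Q :=
  ENNReal.div_mul_cancel hQ.volume_ne_zero hQ.volume_ne_top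

lemma IsDyadicCube.exists_subset_maximal (hQ : IsDyadicCube Q)
    (hT : ∀ P ∈ T, IsDyadicCube P ∧ P ⊆ Q) {P : Set (Fin n → ℝ)} (hP : P ∈ T) :
    ∃ R, P ⊆ R ∧ Maximal (· ∈ T) R := by
  have hfin : {R ∈ T | P ⊆ R}.Finite :=
    (finite_setOf_between (hT P hP).1 hQ).subset fun R ⟨hR, hPR⟩ => ⟨(hT R hR).1, hPR, (hT R hR).2⟩
  obtain ⟨R, hPR, hR⟩ := hfin.exists_le_maximal ⟨hP, subset_rfl⟩
  exact ⟨R, hPR, hR.prop.1, fun R' hR' hRR' => hR.2 ⟨hR', hPR.trans hRR'⟩ hRR'⟩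

/-- The maximal cubes of `T` are pairwise disjoint and cover `⋃ T`. -/
lemma IsDyadicCube.measure_biUnion_le {μ ν : Measure (Fin n → ℝ)} (hQ : IsDyadicCube Q)
    (hT : ∀ P ∈ T, IsDyadicCube P ∧ P ⊆ Q) (hμν : ∀ P ∈ T, μ P ≤ ν P) : μ (⋃ P ∈ T, P) ≤ ν Q := by
  set G := {R | Maximal (· ∈ T) R}
  have hGT : G ⊆ T := fun R hR => hR.prop
  have hGc : G.Countable := countable_setOf_isDyadicCube.mono fun R hR => (hT R (hGT hR)).1
  have hGdisj : G.PairwiseDisjoint id := fun R hR R' hR' hne => by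
    by_contra h
    rcases (hT R hR.prop).1.subset_or_subset (hT R' hR'.prop).1 h with hsub | hsub
    · exact hne (hR.eq_of_subset hR'.prop hsub)
    · exact hne (hR'.eq_of_subset hR.prop hsub).symm
  have hcover : ⋃ P ∈ T, P ⊆ ⋃ R ∈ G, R := iUnion₂_subset fun P hP => by
    obtain ⟨R, hPR, hR⟩ := hQ.exists_subset_maximal hT hP
    exact hPR.trans (subset_biUnion_of_mem (u := id) hR)
  calc μ (⋃ P ∈ T, P) ≤ μ (⋃ R ∈ G, R) := measure_mono hcover
    _ ≤ ∑' R : G, μ R := MeasureTheory.measure_biUnion_le μ hGc _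
    _ ≤ ∑' R : G, ν R := ENNReal.tsum_le_tsum fun R => hμν R (hGT R.2)
    _ = ν (⋃ R ∈ G, R) :=
      (measure_biUnion hGc hGdisj fun R hR => (hT R (hGT hR)).1.measurableSet).symm
    _ ≤ ν Q := measure_mono (iUnion₂_subset fun R hR => (hT R (hGT hR)).2)

lemma IsSparse.mul_tsum_volume_le (hS : IsSparse η S) (hT : T ⊆ S) :
    η * ∑' P : T, volume (P : Set (Fin n → ℝ)) ≤ volume (⋃ P ∈ T, P) := by
  obtain ⟨hdy, E, hE, hdisj⟩ := hS
  have hTc : T.Countable := countable_setOf_isDyadicCube.mono fun P hP => hdy P (hT hP)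
  calc η * ∑' P : T, volume (P : Set (Fin n → ℝ)) = ∑' P : T, η * volume (P : Set (Fin n → ℝ)) :=
        ENNReal.tsum_mul_left.symm
    _ ≤ ∑' P : T, volume (E P) := ENNReal.tsum_le_tsum fun P => (hE P (hT P.2)).2.2
    _ = volume (⋃ P ∈ T, E P) :=
      (measure_biUnion hTc (hdisj.subset hT) fun P hP => (hE P (hT hP)).2.1).symm
    _ ≤ volume (⋃ P ∈ T, P) := measure_mono (iUnion₂_mono fun P hP => (hE P (hT hP)).1)

lemma IsDyadicCube.avg_mul_mass_mul_rpow_le {P : Set (Fin n → ℝ)} (hP : IsDyadicCube P)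
    (hp : 2 ≤ p) {t M : ℝ≥0∞} (ht : t ≤ avg σ P) (hM : avg w P * avg σ P ^ (p - 1) ≤ M) :
    avg σ P * mass w P * t ^ (p - 2) ≤ M * volume P :=
  calc avg σ P * mass w P * t ^ (p - 2) ≤ avg σ P * mass w P * avg σ P ^ (p - 2) :=
        mul_le_mul_right (ENNReal.rpow_le_rpow ht (by linarith)) _
    _ = avg w P * avg σ P ^ (p - 1) * volume P := by
        rw [← hP.avg_mul_volume, show p - 1 = (p - 2) + 1 by ring,
          ENNReal.rpow_add_one_of_nonneg _ (by linarith)]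
        ring
    _ ≤ M * volume P := mul_le_mul_left hM _

lemma IsDyadicCube.mul_volume_le_rpow_mul_mass {P : Set (Fin n → ℝ)} (hP : IsDyadicCube P)
    (hp : 1 ≤ p) {u : ℝ≥0∞} (hu : avg σ P ≤ u) (hL : L ≤ avg w P * avg σ P ^ (p - 1)) :
    L * volume P ≤ u ^ (p - 1) * mass w P :=
  calc L * volume P ≤ avg w P * avg σ P ^ (p - 1) * volume P := mul_le_mul_left hL _
    _ ≤ avg w P * u ^ (p - 1) * volume P := by
        gcongr avg w P * ?_ * _; exact ENNReal.rpow_le_rpow hu (by linarith)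
    _ = u ^ (p - 1) * mass w P := by rw [← hP.avg_mul_volume]; ring

lemma IsSparse.mul_tsum_avg_mul_mass_le_of_layer (hS : IsSparse η S) (hQ : IsDyadicCube Q)
    (hp : 2 ≤ p) (hT : ∀ P ∈ T, P ∈ S ∧ P ⊆ Q) {t : ℝ≥0∞} (ht0 : t ≠ 0) (htt : t ≠ ∞)
    (hσ : ∀ P ∈ T, t ≤ avg σ P ∧ avg σ P ≤ 2 * t)
    (hw : ∀ P ∈ T, L ≤ avg w P * avg σ P ^ (p - 1) ∧ avg w P * avg σ P ^ (p - 1) ≤ 2 * L) :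
    η * ∑' P : T, avg σ P * mass w P ≤ 2 ^ p * t * mass w Q := by
  have hdy : ∀ P ∈ T, IsDyadicCube P := fun P hP => hS.1 P (hT P hP).1
  have hunion : L * volume (⋃ P ∈ T, P) ≤ (2 * t) ^ (p - 1) * mass w Q := by
    have := hQ.measure_biUnion_le (μ := L • volume)
      (ν := (2 * t) ^ (p - 1) • volume.withDensity w) (fun P hP => ⟨hdy P hP, (hT P hP).2⟩)
      fun P hP => by
        simpa [withDensity_apply _ (hdy P hP).measurableSet, mass] using
          (hdy P hP).mul_volume_le_rpow_mul_mass (by linarith) (hσ P hP).2 (hw P hP).1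
    simpa [withDensity_apply _ hQ.measurableSet, mass] using this
  have hsparse := hS.mul_tsum_volume_le fun P hP => (hT P hP).1
  have htp0 : t ^ (p - 2) ≠ 0 := by simp [ht0, htt]
  have htpt : t ^ (p - 2) ≠ ∞ := by simp [ht0, htt]
  refine (ENNReal.mul_le_mul_iff_right htp0 htpt).1 ?_
  calc t ^ (p - 2) * (η * ∑' P : T, avg σ P * mass w P)
      = η * ∑' P : T, avg σ P * mass w P * t ^ (p - 2) := by rw [ENNReal.tsum_mul_right]; ring
    _ ≤ η * ∑' P : T, 2 * L * volume (P : Set (Fin n → ℝ)) := by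
        gcongr η * ?_
        exact ENNReal.tsum_le_tsum fun P =>
          (hdy P P.2).avg_mul_mass_mul_rpow_le hp (hσ P P.2).1 (hw P P.2).2
    _ = 2 * (L * (η * ∑' P : T, volume (P : Set (Fin n → ℝ)))) := by
        rw [ENNReal.tsum_mul_left]; ring
    _ ≤ 2 * ((2 * t) ^ (p - 1) * mass w Q) := by
        gcongr 2 * ?_; exact (mul_le_mul_right hsparse L).trans hunion
    _ = t ^ (p - 2) * (2 ^ p * t * mass w Q) := by
        have h2p : (2 : ℝ≥0∞) ^ p = 2 ^ (p - 1) * 2 := by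
          rw [← ENNReal.rpow_add_one_of_nonneg _ (by linarith), sub_add_cancel]
        rw [ENNReal.mul_rpow_of_nonneg _ _ (by linarith), h2p, show p - 1 = (p - 2) + 1 by ring,
          ENNReal.rpow_add_one_of_nonneg t (by linarith)]
        ring

lemma IsSparse.mul_tsum_avg_mul_mass_le {s : ℝ≥0∞} (hS : IsSparse η S) (hQ : IsDyadicCube Q)
    (hp : 2 ≤ p) (hT : ∀ P ∈ T, P ∈ S ∧ P ⊆ Q) (hσ : ∀ P ∈ T, 1 ≤ avg σ P ∧ avg σ P ≤ s)
    (hw : ∀ P ∈ T, L ≤ avg w P * avg σ P ^ (p - 1) ∧ avg w P * avg σ P ^ (p - 1) ≤ 2 * L) :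
    η * ∑' P : T, avg σ P * mass w P ≤ 2 ^ (p + 1) * s * mass w Q := by
  rcases eq_or_ne (mass w Q) 0 with hwQ | hwQ
  · have hzero : ∀ P : T, avg σ P * mass w P = 0 := fun P => by
      rw [nonpos_iff_eq_zero.1 (hwQ ▸ mass_mono (hT P P.2).2 : mass w P ≤ 0), mul_zero]
    simp [hzero]
  rcases eq_or_ne s ∞ with rfl | hs
  · simp [ENNReal.mul_top, hwQ]
  let layer (m : ℕ) : Set (Set (Fin n → ℝ)) := {P ∈ T | 2 ^ m ≤ avg σ P ∧ avg σ P ≤ 2 * 2 ^ m}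
  have hcover : T ⊆ ⋃ m : {m : ℕ | (2 : ℝ≥0∞) ^ m ≤ s}, layer m := fun P hP => by
    obtain ⟨m, hm, hm'⟩ :=
      ENNReal.exists_two_pow_le_lt (hσ P hP).1 (ne_top_of_le_ne_top hs (hσ P hP).2)
    exact mem_iUnion.2 ⟨⟨m, hm.trans (hσ P hP).2⟩, hP, hm, pow_succ' (2 : ℝ≥0∞) m ▸ hm'.le⟩
  calc η * ∑' P : T, avg σ P * mass w P
      ≤ η * ∑' m : {m : ℕ | (2 : ℝ≥0∞) ^ m ≤ s}, ∑' P : layer m, avg σ P * mass w P := by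
        gcongr η * ?_
        refine (ENNReal.tsum_mono_subtype (fun P => avg σ P * mass w P) hcover).trans ?_
        exact ENNReal.tsum_iUnion_le_tsum (fun P => avg σ P * mass w P)
          fun m : {m : ℕ | (2 : ℝ≥0∞) ^ m ≤ s} => layer m
    _ = ∑' m : {m : ℕ | (2 : ℝ≥0∞) ^ m ≤ s}, η * ∑' P : layer m, avg σ P * mass w P :=
        ENNReal.tsum_mul_left.symm
    _ ≤ ∑' m : {m : ℕ | (2 : ℝ≥0∞) ^ m ≤ s}, 2 ^ p * 2 ^ (m : ℕ) * mass w Q :=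
        ENNReal.tsum_le_tsum fun m => hS.mul_tsum_avg_mul_mass_le_of_layer hQ hp
          (fun P hP => hT P hP.1) (by simp) (by simp) (fun P hP => hP.2) (fun P hP => hw P hP.1)
    _ = 2 ^ p * (∑' m : {m : ℕ | (2 : ℝ≥0∞) ^ m ≤ s}, 2 ^ (m : ℕ)) * mass w Q := by
        rw [ENNReal.tsum_mul_right, ENNReal.tsum_mul_left]
    _ ≤ 2 ^ p * (2 * s) * mass w Q := by gcongr; exact ENNReal.tsum_two_pow_le s
    _ = 2 ^ (p + 1) * s * mass w Q := by
        rw [ENNReal.rpow_add_one_of_nonneg _ (by linarith)]; ring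

end Sparse

theorem statement8 (eta : ℝ≥0∞) (heta0 : 0 < eta) (heta1 : eta ≤ 1) (p : ℝ)
    (hp : 2 ≤ p) (n : ℕ) :
    ∃ C : ℝ≥0∞, C < ∞ ∧
      ∀ (w σ : (Fin n → ℝ) → ℝ≥0∞), Measurable w → Measurable σ →
      ∀ (S : Set (Set (Fin n → ℝ))), IsSparse eta S →
      (∀ Q' ∈ S, 1 ≤ avg σ Q') →
      (0 < ⨆ (Q' : Set (Fin n → ℝ)) (_ : Q' ∈ S), avg w Q' * (avg σ Q') ^ (p-1)) →
      (⨆ (Q' : Set (Fin n → ℝ)) (_ : Q' ∈ S), avg w Q' * (avg σ Q') ^ (p-1)) < ∞ →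
      ∀ (ψ : ℝ≥0∞ → ℝ≥0∞), MonotoneOn ψ (Set.Ici 1) → (∀ t, 0 < ψ t) →
      ∀ Q ∈ S, ∀ k : ℕ, 1 ≤ k →
      ∑' Q' : {Q' : Set (Fin n → ℝ) // Q' ∈ S ∧ Q' ⊆ Q ∧
          avg σ Q' ≤ (avg σ Q) ^ ((2:ℝ)⁻¹) ∧
          (2:ℝ≥0∞) ^ ((k:ℝ)-1) *
            (⨆ (P : Set (Fin n → ℝ)) (_ : P ∈ S), avg w P * (avg σ P) ^ (p-1)) / ψ (avg σ Q)
            < avg w Q' * (avg σ Q') ^ (p-1) ∧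
          avg w Q' * (avg σ Q') ^ (p-1) ≤
            (2:ℝ≥0∞) ^ (k:ℝ) *
              (⨆ (P : Set (Fin n → ℝ)) (_ : P ∈ S), avg w P * (avg σ P) ^ (p-1)) / ψ (avg σ Q)},
        avg σ Q'.1 * mass w Q'.1
      ≤ C * (avg σ Q) ^ ((2:ℝ)⁻¹) * mass w Q := by
  have heta : eta ≠ ∞ := ne_top_of_le_ne_top ENNReal.one_ne_top heta1
  refine ⟨2 ^ (p + 1) / eta, ENNReal.div_lt_top (by simp) heta0.ne', ?_⟩
  intro w σ _ _ S hS hσ _ _ ψ _ _ Q hQ k _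
  set A := ⨆ (P : Set (Fin n → ℝ)) (_ : P ∈ S), avg w P * (avg σ P) ^ (p-1)
  have hthreshold : (2 : ℝ≥0∞) ^ (k : ℝ) * A / ψ (avg σ Q)
      = 2 * (2 ^ ((k : ℝ) - 1) * A / ψ (avg σ Q)) := by
    conv_lhs =>
      rw [← sub_add_cancel (k : ℝ) 1, ENNReal.rpow_add _ _ two_ne_zero ENNReal.ofNat_ne_top]
    rw [ENNReal.rpow_one, mul_div_assoc, mul_div_assoc]
    ring
  refine (ENNReal.mul_le_mul_iff_right heta0.ne' heta).1 ?_
  rw [← mul_assoc, ← mul_assoc, ENNReal.mul_div_cancel heta0.ne' heta]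
  exact hS.mul_tsum_avg_mul_mass_le (hS.1 Q hQ) hp (fun P hP => ⟨hP.1, hP.2.1⟩)
    (fun P hP => ⟨hσ P hP.1, hP.2.2.1⟩) (fun P hP => ⟨hP.2.2.2.1.le, hthreshold ▸ hP.2.2.2.2⟩)
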